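/- arXiv:1301.6257 — 5 statements merged into one kernel-verified Lean document; each statement's English description precedes it below -/
import Mathlib

section
/- Let ε, C, R be positive real numbers with C·R·ε < 1. Let H : [0,ε] → ℝ be continuous on [0,ε], differentiable on (0,ε), with H(0) = 0. Let φ, ξ : [0,ε] → ℝ be continuous functions with φ(t) > 0 and ξ(t) ≥ 0 for all t ∈ [0,ε], and suppose that (1/φ(t))·∫₀ᵗ ξ(s) ds ≤ 2C for every t ∈ [0,ε]. If H′(t) ≤ −(R/2)·(1/φ(t))·∫₀ᵗ H(s)·ξ(s) ds for every t ∈ (0,ε), then H(t) ≤ 0 for every t ∈ [0,ε). -/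
open Set intervalIntegral

/-!
Fix `t < ε` and let `m ≤ H 0 = 0` be the minimum of `H` on `[0, t]`, attained at `s`. Then
`∫₀ᵘ H ξ ≥ m ∫₀ᵘ ξ` for `u ≤ t`, so the differential inequality and the bound on `∫ ξ / φ` give
`H' ≤ -C R m` on `(0, t)`. By the mean value theorem
`H t ≤ m - C R m (t - s) ≤ m (1 - C R ε) ≤ 0`.
-/

theorem mul_integral_le_integral_mul_of_le {f g : ℝ → ℝ} {a b m : ℝ} (hab : a ≤ b)
    (hf : ContinuousOn f (Icc a b)) (hg : ContinuousOn g (Icc a b))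
    (hfm : ∀ x ∈ Icc a b, m ≤ f x) (hg0 : ∀ x ∈ Icc a b, 0 ≤ g x) :
    m * ∫ x in a..b, g x ≤ ∫ x in a..b, f x * g x := by
  rw [← integral_const_mul]
  refine integral_mono_on hab ?_ ?_ fun x hx => mul_le_mul_of_nonneg_right (hfm x hx) (hg0 x hx)
  · exact (continuousOn_const.mul hg).intervalIntegrable_of_Icc hab
  · exact (hf.mul hg).intervalIntegrable_of_Icc hab

theorem le_neg_mul_of_le_neg_mul_integral_mul {H ξ : ℝ → ℝ} {a u m C R φu d : ℝ} (hau : a ≤ u)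
    (hR : 0 ≤ R) (hm : m ≤ 0) (hH : ContinuousOn H (Icc a u)) (hξ : ContinuousOn ξ (Icc a u))
    (hHm : ∀ x ∈ Icc a u, m ≤ H x) (hξ0 : ∀ x ∈ Icc a u, 0 ≤ ξ x) (hφ : 0 ≤ φu)
    (hbound : (1 / φu) * ∫ x in a..u, ξ x ≤ 2 * C)
    (hd : d ≤ -(R / 2) * ((1 / φu) * ∫ x in a..u, H x * ξ x)) :
    d ≤ -(C * R * m) := by
  have hint := mul_integral_le_integral_mul_of_le hau hH hξ hHm hξ0
  calc d ≤ -(R / 2) * ((1 / φu) * ∫ x in a..u, H x * ξ x) := hd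
    _ = -(R / 2 * (1 / φu) * ∫ x in a..u, H x * ξ x) := by ring
    _ ≤ -(R / 2 * (1 / φu) * (m * ∫ x in a..u, ξ x)) := by gcongr
    _ = R / 2 * -m * ((1 / φu) * ∫ x in a..u, ξ x) := by ring
    _ ≤ R / 2 * -m * (2 * C) :=
      mul_le_mul_of_nonneg_left hbound (mul_nonneg (by positivity) (neg_nonneg.mpr hm))
    _ = -(C * R * m) := by ring

theorem stmt_0_general (ε C R : ℝ) (hC : 0 < C) (hR : 0 < R)
    (hCRε : C * R * ε < 1)
    (H H' φ ξ : ℝ → ℝ)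
    (hHcont : ContinuousOn H (Icc 0 ε))
    (hHderiv : ∀ t ∈ Ioo 0 ε, HasDerivAt H (H' t) t)
    (hH0 : H 0 = 0)
    (hξcont : ContinuousOn ξ (Icc 0 ε))
    (hφpos : ∀ t ∈ Icc 0 ε, 0 < φ t)
    (hξnonneg : ∀ t ∈ Icc 0 ε, 0 ≤ ξ t)
    (hbound : ∀ t ∈ Icc 0 ε, (1 / φ t) * ∫ s in (0:ℝ)..t, ξ s ≤ 2 * C)
    (hineq : ∀ t ∈ Ioo 0 ε,
      H' t ≤ -(R / 2) * ((1 / φ t) * ∫ s in (0:ℝ)..t, H s * ξ s)) :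
    ∀ t ∈ Ico 0 ε, H t ≤ 0 := by
  rintro t ⟨ht0, htε⟩
  have hsub : Icc 0 t ⊆ Icc 0 ε := Icc_subset_Icc_right htε.le
  obtain ⟨s, hs, hmin⟩ :=
    isCompact_Icc.exists_isMinOn (nonempty_Icc.mpr ht0) (hHcont.mono hsub)
  have hm : H s ≤ 0 := hH0 ▸ hmin ⟨le_rfl, ht0⟩
  have hderiv : ∀ u ∈ Ioo 0 t, HasDerivAt H (H' u) u := fun u hu =>
    hHderiv u ⟨hu.1, hu.2.trans htε⟩
  have hslope : ∀ u ∈ Ioo 0 t, H' u ≤ -(C * R * H s) := fun u hu => by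
    have hu' : Icc 0 u ⊆ Icc 0 ε := Icc_subset_Icc_right (hu.2.trans htε).le
    exact le_neg_mul_of_le_neg_mul_integral_mul hu.1.le hR.le hm (hHcont.mono hu')
      (hξcont.mono hu') (fun x hx => hmin ⟨hx.1, hx.2.trans hu.2.le⟩)
      (fun x hx => hξnonneg x (hu' hx)) (hφpos u (hu' (right_mem_Icc.mpr hu.1.le))).le
      (hbound u (hu' (right_mem_Icc.mpr hu.1.le))) (hineq u ⟨hu.1, hu.2.trans htε⟩)
  have hmvt : H t - H s ≤ -(C * R * H s) * (t - s) := by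
    refine (convex_Icc 0 t).image_sub_le_mul_sub_of_deriv_le (hHcont.mono hsub) ?_ ?_
      s hs t (right_mem_Icc.mpr ht0) hs.2 <;> rw [interior_Icc]
    · exact fun u hu => (hderiv u hu).differentiableAt.differentiableWithinAt
    · exact fun u hu => (hderiv u hu).deriv ▸ hslope u hu
  have hCRm : 0 ≤ -(C * R * H s) := by nlinarith [mul_pos hC hR]
  nlinarith [mul_le_mul_of_nonneg_left (by linarith [hs.1] : t - s ≤ ε) hCRm]

/-- Case b) (inf R^M > 0) of the proof of Proposition 4.1:
if `C·R·ε < 1`, `H(0) = 0` and `H'` satisfies the integral differential inequality,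
then `H ≤ 0` on `[0, ε)`. -/
theorem stmt_0 (ε C R : ℝ) (hε : 0 < ε) (hC : 0 < C) (hR : 0 < R)
    (hCRε : C * R * ε < 1)
    (H H' φ ξ : ℝ → ℝ)
    (hHcont : ContinuousOn H (Icc 0 ε))
    (hHderiv : ∀ t ∈ Ioo 0 ε, HasDerivAt H (H' t) t)
    (hH0 : H 0 = 0)
    (hφcont : ContinuousOn φ (Icc 0 ε))
    (hξcont : ContinuousOn ξ (Icc 0 ε))
    (hφpos : ∀ t ∈ Icc 0 ε, 0 < φ t)
    (hξnonneg : ∀ t ∈ Icc 0 ε, 0 ≤ ξ t)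
    (hbound : ∀ t ∈ Icc 0 ε, (1 / φ t) * ∫ s in (0:ℝ)..t, ξ s ≤ 2 * C)
    (hineq : ∀ t ∈ Ioo 0 ε,
      H' t ≤ -(R / 2) * ((1 / φ t) * ∫ s in (0:ℝ)..t, H s * ξ s)) :
    ∀ t ∈ Ico 0 ε, H t ≤ 0 :=
  stmt_0_general ε C R hC hR hCRε H H' φ ξ hHcont hHderiv hH0 hξcont hφpos hξnonneg hbound hineq
end

section
/- Let ε, C be positive real numbers and let R be a negative real number with −C·R·ε < 1. Let H : [0,ε] → ℝ be continuous on [0,ε], differentiable on (0,ε), with H(0) = 0. Let φ, ξ : [0,ε] → ℝ be continuous functions with φ(t) > 0 and ξ(t) ≥ 0 for all t ∈ [0,ε], and suppose that (1/φ(t))·∫₀ᵗ ξ(s) ds ≤ 2C for every t ∈ [0,ε]. If H′(t) ≤ −(R/2)·(1/φ(t))·∫₀ᵗ H(s)·ξ(s) ds for every t ∈ (0,ε), then H(t) ≤ 0 for every t ∈ [0,ε). -/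
open Set intervalIntegral

/-! If `H` were positive somewhere on `[0, ε)`, let `M > 0` be its maximum on `[0, t₀]`, attained
at `t₁ > 0`. Bounding `H` by `M` inside the integral gives `H' ≤ -R C M` on `(0, t₁)`, so the mean
value theorem yields `M = H t₁ - H 0 ≤ -R C t₁ M < M`. -/

theorem integral_mul_le_mul_integral_of_le {f g : ℝ → ℝ} {a b M : ℝ} (hab : a ≤ b)
    (hf : ContinuousOn f (Icc a b)) (hg : ContinuousOn g (Icc a b))
    (hfM : ∀ s ∈ Icc a b, f s ≤ M) (hg0 : ∀ s ∈ Icc a b, 0 ≤ g s) :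
    ∫ s in a..b, f s * g s ≤ M * ∫ s in a..b, g s := by
  rw [← integral_const_mul]
  exact integral_mono_on hab ((hf.mul hg).intervalIntegrable_of_Icc hab)
    ((continuousOn_const.mul hg).intervalIntegrable_of_Icc hab)
    fun s hs => mul_le_mul_of_nonneg_right (hfM s hs) (hg0 s hs)

theorem nonpos_of_hasDerivAt_le_mul_bound {H H' : ℝ → ℝ} {K T : ℝ} (hKT : K * T ≤ 1)
    (hHcont : ContinuousOn H (Icc 0 T)) (hHderiv : ∀ t ∈ Ioo 0 T, HasDerivAt H (H' t) t)
    (hH0 : H 0 = 0)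
    (hH'le : ∀ t ∈ Ioo 0 T, ∀ M, 0 < M → (∀ s ∈ Icc 0 t, H s ≤ M) → H' t ≤ K * M) :
    ∀ t ∈ Ico 0 T, H t ≤ 0 := by
  rintro t₀ ⟨ht₀, ht₀T⟩
  by_contra! hpos
  obtain ⟨t₁, ⟨ht₁0, ht₁t₀⟩, hmax⟩ := isCompact_Icc.exists_isMaxOn (nonempty_Icc.2 ht₀)
    (hHcont.mono (Icc_subset_Icc_right ht₀T.le))
  have hM : 0 < H t₁ := hpos.trans_le (hmax (right_mem_Icc.2 ht₀))
  have ht₁pos : 0 < t₁ := ht₁0.lt_of_ne (by rintro rfl; simp [hH0] at hM)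
  have ht₁T : t₁ < T := ht₁t₀.trans_lt ht₀T
  obtain ⟨c, ⟨hc0, hct₁⟩, hc⟩ := exists_hasDerivAt_eq_slope H H' ht₁pos
    (hHcont.mono (Icc_subset_Icc_right ht₁T.le)) fun t ht => hHderiv t ⟨ht.1, ht.2.trans ht₁T⟩
  have hslope : H' c ≤ K * H t₁ := hH'le c ⟨hc0, hct₁.trans ht₁T⟩ _ hM
    fun s hs => hmax (Icc_subset_Icc_right (hct₁.le.trans ht₁t₀) hs)
  rw [hc, hH0, sub_zero, sub_zero, div_le_iff₀ ht₁pos] at hslope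
  have hKt₁ : 1 ≤ K * t₁ := le_of_mul_le_mul_left (by linarith) hM
  have hK : 0 < K := pos_of_mul_pos_left (one_pos.trans_le hKt₁) ht₁pos.le
  nlinarith [mul_lt_mul_of_pos_left ht₁T hK]

theorem stmt_1_general (ε C R : ℝ) (hR : R < 0)
    (hCRε : -(C * R * ε) < 1)
    (H H' φ ξ : ℝ → ℝ)
    (hHcont : ContinuousOn H (Icc 0 ε))
    (hHderiv : ∀ t ∈ Ioo 0 ε, HasDerivAt H (H' t) t)
    (hH0 : H 0 = 0)
    (hξcont : ContinuousOn ξ (Icc 0 ε))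
    (hφpos : ∀ t ∈ Icc 0 ε, 0 < φ t)
    (hξnonneg : ∀ t ∈ Icc 0 ε, 0 ≤ ξ t)
    (hbound : ∀ t ∈ Icc 0 ε, (1 / φ t) * ∫ s in (0:ℝ)..t, ξ s ≤ 2 * C)
    (hineq : ∀ t ∈ Ioo 0 ε,
      H' t ≤ -(R / 2) * ((1 / φ t) * ∫ s in (0:ℝ)..t, H s * ξ s)) :
    ∀ t ∈ Ico 0 ε, H t ≤ 0 := by
  refine nonpos_of_hasDerivAt_le_mul_bound (K := -(R * C)) (by linarith) hHcont hHderiv hH0 ?_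
  intro t ht M hM hHM
  have hsub : Icc 0 t ⊆ Icc 0 ε := Icc_subset_Icc_right ht.2.le
  have hφt : 0 ≤ 1 / φ t := (one_div_pos.2 (hφpos t (Ioo_subset_Icc_self ht))).le
  have hRM : 0 ≤ -(R / 2) * M := by nlinarith
  calc H' t ≤ -(R / 2) * ((1 / φ t) * ∫ s in (0:ℝ)..t, H s * ξ s) := hineq t ht
    _ ≤ -(R / 2) * ((1 / φ t) * (M * ∫ s in (0:ℝ)..t, ξ s)) := by
        refine mul_le_mul_of_nonneg_left (mul_le_mul_of_nonneg_left ?_ hφt) (by linarith)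
        exact integral_mul_le_mul_integral_of_le ht.1.le (hHcont.mono hsub) (hξcont.mono hsub)
          hHM fun s hs => hξnonneg s (hsub hs)
    _ = -(R / 2) * M * ((1 / φ t) * ∫ s in (0:ℝ)..t, ξ s) := by ring
    _ ≤ -(R / 2) * M * (2 * C) := mul_le_mul_of_nonneg_left (hbound t (Ioo_subset_Icc_self ht)) hRM
    _ = -(R * C) * M := by ring

/-- Case c) (inf R^M < 0) of the proof of Proposition 4.1:
if `R < 0`, `−C·R·ε < 1`, `H(0) = 0` and `H'` satisfies the integral differential
inequality, then `H ≤ 0` on `[0, ε)`. -/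
theorem stmt_1 (ε C R : ℝ) (hε : 0 < ε) (hC : 0 < C) (hR : R < 0)
    (hCRε : -(C * R * ε) < 1)
    (H H' φ ξ : ℝ → ℝ)
    (hHcont : ContinuousOn H (Icc 0 ε))
    (hHderiv : ∀ t ∈ Ioo 0 ε, HasDerivAt H (H' t) t)
    (hH0 : H 0 = 0)
    (hφcont : ContinuousOn φ (Icc 0 ε))
    (hξcont : ContinuousOn ξ (Icc 0 ε))
    (hφpos : ∀ t ∈ Icc 0 ε, 0 < φ t)
    (hξnonneg : ∀ t ∈ Icc 0 ε, 0 ≤ ξ t)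
    (hbound : ∀ t ∈ Icc 0 ε, (1 / φ t) * ∫ s in (0:ℝ)..t, ξ s ≤ 2 * C)
    (hineq : ∀ t ∈ Ioo 0 ε,
      H' t ≤ -(R / 2) * ((1 / φ t) * ∫ s in (0:ℝ)..t, H s * ξ s)) :
    ∀ t ∈ Ico 0 ε, H t ≤ 0 :=
  stmt_1_general ε C R hR hCRε H H' φ ξ hHcont hHderiv hH0 hξcont hφpos hξnonneg hbound hineq
end

section
/- Let ε₀ > 0 and let R be any real number. Let H : [0,ε₀] → ℝ be continuously differentiable with H(0) = 0, and let φ, ξ : [0,ε₀] → ℝ be continuous functions with φ(t) > 0 and ξ(t) > 0 for all t ∈ [0,ε₀]. Suppose that H′(t)·φ(t) ≤ −(R/2)·∫₀ᵗ H(s)·ξ(s) ds for every t ∈ [0,ε₀]. Then there exists ε ∈ (0,ε₀] such that H(t) ≤ 0 for every t ∈ [0,ε). -/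
open Set intervalIntegral

/-!
With `K = |R| / (2 min φ)` and `B ≥ sup |ξ|`, the hypothesis gives `H' r ≤ K |∫₀ʳ H ξ|`.
Suppose `H t > 0` and let `S = max_{[0,t]} |H| > 0`. Then `H' ≤ K B S t` on `[0,t]`;
integrating this one-sided bound forwards from `H 0 = 0` and backwards from `H t > 0`
gives `|H| ≤ K B t² S` on `[0,t]`, which is absurd once `K B t² < 1`.
-/

theorem sub_le_mul_sub_of_hasDerivWithinAt_le {D : Set ℝ} (hD : Convex ℝ D) {f f' : ℝ → ℝ}
    {C : ℝ} (hf : ∀ x ∈ D, HasDerivWithinAt f (f' x) D x) (hf' : ∀ x ∈ D, f' x ≤ C)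
    {x y : ℝ} (hx : x ∈ D) (hy : y ∈ D) (hxy : x ≤ y) : f y - f x ≤ C * (y - x) := by
  have hmono : MonotoneOn (fun z => C * z - f z) D := by
    refine monotoneOn_of_hasDerivWithinAt_nonneg (f' := fun z => C * 1 - f' z) hD
      ((continuousOn_const.mul continuousOn_id).sub fun z hz => (hf z hz).continuousWithinAt)
      (fun z hz => ((hasDerivWithinAt_id z _).const_mul C).sub
        ((hf z (interior_subset hz)).mono interior_subset))
      (fun z hz => by simpa using hf' z (interior_subset hz))
  linarith [hmono hx hy hxy]

theorem abs_le_of_sub_le_mul_sub {f : ℝ → ℝ} {t D : ℝ} (h0 : f 0 = 0) (ht : 0 ≤ f t)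
    (hD : 0 ≤ D) (hinc : ∀ x ∈ Icc 0 t, ∀ y ∈ Icc 0 t, x ≤ y → f y - f x ≤ D * (y - x))
    {s : ℝ} (hs : s ∈ Icc 0 t) : |f s| ≤ D * t := by
  have h0t : (0 : ℝ) ≤ t := hs.1.trans hs.2
  have hup := hinc 0 (left_mem_Icc.2 h0t) s hs hs.1
  have hdown := hinc s hs t (right_mem_Icc.2 h0t) hs.2
  rw [abs_le]
  constructor <;> nlinarith [hs.1, hs.2]

theorem nonpos_of_deriv_le_mul_abs_integral {H H' ξ : ℝ → ℝ} {t K B : ℝ} (ht : 0 ≤ t)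
    (hK : 0 ≤ K) (hH : ∀ x ∈ Icc 0 t, HasDerivWithinAt H (H' x) (Icc 0 t) x) (hH0 : H 0 = 0)
    (hξ : ∀ x ∈ Icc 0 t, |ξ x| ≤ B)
    (hH' : ∀ r ∈ Icc 0 t, H' r ≤ K * |∫ s in (0 : ℝ)..r, H s * ξ s|)
    (hsmall : K * B * t ^ 2 < 1) : H t ≤ 0 := by
  by_contra! hpos
  have hB : 0 ≤ B := (abs_nonneg _).trans (hξ 0 (left_mem_Icc.2 ht))
  obtain ⟨m, hm, hmax⟩ := isCompact_Icc.exists_isMaxOn (nonempty_Icc.2 ht)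
    (fun x hx => (hH x hx).continuousWithinAt.abs : ContinuousOn (fun x => |H x|) (Icc 0 t))
  set S := |H m|
  have hS : 0 < S := hpos.trans_le ((le_abs_self _).trans (hmax (right_mem_Icc.2 ht)))
  have hintegral : ∀ r ∈ Icc 0 t, |∫ s in (0 : ℝ)..r, H s * ξ s| ≤ S * B * t := by
    intro r hr
    have hintegrand : ∀ x ∈ uIoc 0 r, ‖H x * ξ x‖ ≤ S * B := by
      intro x hx
      rw [uIoc_of_le hr.1] at hx
      have hxt : x ∈ Icc 0 t := ⟨hx.1.le, hx.2.trans hr.2⟩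
      rw [Real.norm_eq_abs, abs_mul]
      exact mul_le_mul (hmax hxt) (hξ x hxt) (abs_nonneg _) hS.le
    calc |∫ s in (0 : ℝ)..r, H s * ξ s| ≤ S * B * |r - 0| :=
          norm_integral_le_of_norm_le_const hintegrand
      _ ≤ S * B * t := by
          rw [sub_zero, abs_of_nonneg hr.1]
          exact mul_le_mul_of_nonneg_left hr.2 (by positivity)
  have hderiv : ∀ r ∈ Icc 0 t, H' r ≤ K * (S * B * t) := fun r hr =>
    (hH' r hr).trans (mul_le_mul_of_nonneg_left (hintegral r hr) hK)
  have hSle : S ≤ K * (S * B * t) * t :=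
    abs_le_of_sub_le_mul_sub hH0 hpos.le (by positivity)
      (fun x hx y hy hxy => sub_le_mul_sub_of_hasDerivWithinAt_le (convex_Icc 0 t) hH hderiv
        hx hy hxy) hm
  nlinarith

theorem le_div_mul_abs_of_mul_le_neg_mul {a φ m R I : ℝ} (hm : 0 < m) (hmφ : m ≤ φ)
    (h : a * φ ≤ -(R / 2) * I) : a ≤ |R| / (2 * m) * |I| := by
  have hφ : 0 < φ := hm.trans_le hmφ
  refine le_of_mul_le_mul_right ?_ hφ
  calc a * φ ≤ -(R / 2) * I := h
    _ ≤ |-(R / 2) * I| := le_abs_self _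
    _ = |R| / (2 * m) * |I| * m := by
        rw [abs_mul, abs_neg, abs_div, abs_two]; field_simp
    _ ≤ |R| / (2 * m) * |I| * φ := by gcongr

theorem exists_forall_mul_sq_lt_one {ε₀ : ℝ} (hε₀ : 0 < ε₀) {c : ℝ} (hc : 0 ≤ c) :
    ∃ ε, 0 < ε ∧ ε ≤ ε₀ ∧ ∀ t ∈ Ico 0 ε, c * t ^ 2 < 1 := by
  refine ⟨min ε₀ (1 / (c + 1)), lt_min hε₀ (by positivity), min_le_left _ _, ?_⟩
  rintro t ⟨ht0, htε⟩
  have := (lt_div_iff₀ (by positivity)).1 (htε.trans_le (min_le_right _ _))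
  nlinarith

theorem stmt_2_general (ε₀ R : ℝ) (hε₀ : 0 < ε₀)
    (H H' φ ξ : ℝ → ℝ)
    (hHderiv : ∀ t ∈ Icc 0 ε₀, HasDerivWithinAt H (H' t) (Icc 0 ε₀) t)
    (hH0 : H 0 = 0)
    (hφcont : ContinuousOn φ (Icc 0 ε₀))
    (hξcont : ContinuousOn ξ (Icc 0 ε₀))
    (hφpos : ∀ t ∈ Icc 0 ε₀, 0 < φ t)
    (hineq : ∀ t ∈ Icc 0 ε₀,
      H' t * φ t ≤ -(R / 2) * ∫ s in (0:ℝ)..t, H s * ξ s) :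
    ∃ ε, 0 < ε ∧ ε ≤ ε₀ ∧ ∀ t ∈ Ico 0 ε, H t ≤ 0 := by
  obtain ⟨p, hp, hφmin⟩ := isCompact_Icc.exists_isMinOn (nonempty_Icc.2 hε₀.le) hφcont
  obtain ⟨B, hB⟩ := isCompact_Icc.exists_bound_of_continuousOn hξcont
  set K := |R| / (2 * φ p)
  have hK : 0 ≤ K := by have := hφpos p hp; positivity
  have hB0 : 0 ≤ B := (norm_nonneg _).trans (hB 0 (left_mem_Icc.2 hε₀.le))
  obtain ⟨ε, hε, hεε₀, hsmall⟩ := exists_forall_mul_sq_lt_one hε₀ (mul_nonneg hK hB0)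
  refine ⟨ε, hε, hεε₀, fun t ht => ?_⟩
  have hsub : Icc 0 t ⊆ Icc 0 ε₀ := Icc_subset_Icc_right (ht.2.le.trans hεε₀)
  exact nonpos_of_deriv_le_mul_abs_integral ht.1 hK
    (fun x hx => (hHderiv x (hsub hx)).mono hsub) hH0 (fun x hx => hB x (hsub hx))
    (fun r hr => le_div_mul_abs_of_mul_le_neg_mul (hφpos p hp) (hφmin (hsub hr))
      (hineq r (hsub hr)))
    (hsmall t ht)

/-- The Claim in the proof of Proposition 4.1 (all three cases of `R = inf R^M`):
if `H` is C¹ on `[0, ε₀]` with `H(0) = 0` and satisfies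
`H′(t)·φ(t) ≤ −(R/2)·∫₀ᵗ H(s)·ξ(s) ds`, then `H ≤ 0` on `[0, ε)`
for some `ε ∈ (0, ε₀]`. -/
theorem stmt_2 (ε₀ R : ℝ) (hε₀ : 0 < ε₀)
    (H H' φ ξ : ℝ → ℝ)
    (hHderiv : ∀ t ∈ Icc 0 ε₀, HasDerivWithinAt H (H' t) (Icc 0 ε₀) t)
    (hH'cont : ContinuousOn H' (Icc 0 ε₀))
    (hH0 : H 0 = 0)
    (hφcont : ContinuousOn φ (Icc 0 ε₀))
    (hξcont : ContinuousOn ξ (Icc 0 ε₀))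
    (hφpos : ∀ t ∈ Icc 0 ε₀, 0 < φ t)
    (hξpos : ∀ t ∈ Icc 0 ε₀, 0 < ξ t)
    (hineq : ∀ t ∈ Icc 0 ε₀,
      H' t * φ t ≤ -(R / 2) * ∫ s in (0:ℝ)..t, H s * ξ s) :
    ∃ ε, 0 < ε ∧ ε ≤ ε₀ ∧ ∀ t ∈ Ico 0 ε, H t ≤ 0 :=
  stmt_2_general ε₀ R hε₀ H H' φ ξ hHderiv hH0 hφcont hξcont hφpos hineq
end

section
/- Let ε₀ > 0 and let R be any real number. Let H : [−ε₀,0] → ℝ be continuously differentiable with H(0) = 0, and let φ, ξ : [−ε₀,0] → ℝ be continuous functions with φ(t) > 0 and ξ(t) > 0 for all t ∈ [−ε₀,0]. Suppose that H′(t)·φ(t) ≤ −(R/2)·∫₀ᵗ H(s)·ξ(s) ds for every t ∈ [−ε₀,0], where for t < 0 the integral ∫₀ᵗ denotes the signed integral (so ∫₀ᵗ f = −∫ₜ⁰ f). Then there exists ε ∈ (0,ε₀] such that H(t) ≥ 0 for every t ∈ (−ε,0]. -/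
open Set intervalIntegral Filter Topology

/-!
Suppose `H(t₀) < 0` for some `t₀` close to `0`, and let `M` be the maximum of `|H|` on `[t₀, 0]`.
The integral inequality bounds `H'` above by `K·M·|t₀|` with `K = |R|/2 · max ξ / min φ`. Since
`H(t₀) < 0 = H(0)`, this one-sided bound controls `H` from both sides on `[t₀, 0]`, giving
`M ≤ K·t₀²·M`. Once `K·t₀² < 1` this forces `M = 0`, contradicting `H(t₀) < 0`.
-/

lemma exists_pos_le_mul_sq_lt_one (K : ℝ) {ε₀ : ℝ} (hε₀ : 0 < ε₀) :
    ∃ δ, 0 < δ ∧ δ ≤ ε₀ ∧ K * δ ^ 2 < 1 := by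
  have hlim : Tendsto (fun δ : ℝ => K * δ ^ 2) (𝓝[>] 0) (𝓝 0) := by
    have hcont : Continuous fun δ : ℝ => K * δ ^ 2 := by fun_prop
    simpa using (hcont.tendsto 0).mono_left nhdsWithin_le_nhds
  obtain ⟨δ, hδ, hδ_mem⟩ :=
    ((hlim.eventually (gt_mem_nhds one_pos)).and (Ioo_mem_nhdsGT hε₀)).exists
  exact ⟨δ, hδ_mem.1, hδ_mem.2.le, hδ⟩

lemma le_div_of_mul_le_of_le {x y c m : ℝ} (hxy : x * y ≤ c) (hc : 0 ≤ c) (hm : 0 < m)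
    (hmy : m ≤ y) : x ≤ c / m := by
  rw [le_div_iff₀ hm]
  rcases le_or_gt x 0 with hx | hx <;> nlinarith

section Deriv

variable {f f' : ℝ → ℝ} {a b : ℝ}

lemma abs_le_of_hasDerivWithinAt_le {B : ℝ} (hB : 0 ≤ B) (hf : ContinuousOn f (Icc a b))
    (hf' : ∀ x ∈ Ioo a b, HasDerivWithinAt f (f' x) (Ioo a b) x) (hle : ∀ x ∈ Ioo a b, f' x ≤ B)
    (ha : f a ≤ 0) (hb : 0 ≤ f b) : ∀ u ∈ Icc a b, |f u| ≤ B * (b - a) := by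
  have hmono : MonotoneOn (fun x => B * x - f x) (Icc a b) := by
    refine monotoneOn_of_hasDerivWithinAt_nonneg (convex_Icc a b)
      ((continuousOn_const.mul continuousOn_id).sub hf) (f' := fun x => B * 1 - f' x) ?_ ?_
    · intro x hx
      rw [interior_Icc] at hx ⊢
      exact ((hasDerivWithinAt_id x _).const_mul B).sub (hf' x hx)
    · intro x hx
      rw [interior_Icc] at hx
      linarith [hle x hx]
  intro u hu
  have hau : B * a - f a ≤ B * u - f u := hmono ⟨le_rfl, hu.1.trans hu.2⟩ hu hu.1
  have hub : B * u - f u ≤ B * b - f b := hmono hu ⟨hu.1.trans hu.2, le_rfl⟩ hu.2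
  rw [abs_le]
  constructor <;> nlinarith [hu.1, hu.2]

lemma eqOn_zero_of_deriv_le_mul_sup {K : ℝ} (hK : 0 ≤ K) (hKab : K * (b - a) ^ 2 < 1)
    (hab : a ≤ b) (hf : ContinuousOn f (Icc a b))
    (hf' : ∀ x ∈ Ioo a b, HasDerivWithinAt f (f' x) (Ioo a b) x)
    (hle : ∀ M, (∀ u ∈ Icc a b, |f u| ≤ M) → ∀ x ∈ Ioo a b, f' x ≤ K * M * (b - a))
    (ha : f a ≤ 0) (hb : 0 ≤ f b) : EqOn f 0 (Icc a b) := by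
  obtain ⟨u₀, hu₀, hmax⟩ :=
    isCompact_Icc.exists_isMaxOn (nonempty_Icc.2 hab) (continuous_abs.comp_continuousOn hf)
  set M := |f u₀|
  have hM : ∀ u ∈ Icc a b, |f u| ≤ M := fun u hu => hmax hu
  have hbound := abs_le_of_hasDerivWithinAt_le
    (by have := abs_nonneg (f u₀); positivity) hf hf' (hle M hM) ha hb
  have hM0 : M ≤ 0 := by nlinarith [hbound u₀ hu₀, abs_nonneg (f u₀)]
  intro u hu
  exact abs_nonpos_iff.1 ((hM u hu).trans hM0)

end Deriv

lemma le_of_mul_le_neg_half_mul_integral {H ξ : ℝ → ℝ} {R m Ξ M a x y φ : ℝ}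
    (hm : 0 < m) (hφ : m ≤ φ) (hx : x ∈ Icc a 0)
    (hH : ∀ s ∈ Icc a 0, |H s| ≤ M) (hξ : ∀ s ∈ Icc a 0, |ξ s| ≤ Ξ)
    (hineq : y * φ ≤ -(R / 2) * ∫ s in (0:ℝ)..x, H s * ξ s) :
    y ≤ |R| / 2 * Ξ / m * M * (0 - a) := by
  have h0 : (0:ℝ) ∈ Icc a 0 := ⟨hx.1.trans hx.2, le_rfl⟩
  have hM : 0 ≤ M := (abs_nonneg _).trans (hH 0 h0)
  have hΞ : 0 ≤ Ξ := (abs_nonneg _).trans (hξ 0 h0)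
  have hint : |∫ s in (0:ℝ)..x, H s * ξ s| ≤ M * Ξ * (0 - a) := by
    refine (norm_integral_le_of_norm_le_const (C := M * Ξ) (f := fun s => H s * ξ s)
      fun s hs => ?_).trans ?_
    · rw [uIoc_of_ge hx.2] at hs
      have hs' : s ∈ Icc a 0 := ⟨hx.1.trans hs.1.le, hs.2⟩
      rw [Real.norm_eq_abs, abs_mul]
      exact mul_le_mul (hH s hs') (hξ s hs') (abs_nonneg _) hM
    · rw [sub_zero, abs_of_nonpos hx.2]
      exact mul_le_mul_of_nonneg_left (by linarith [hx.1]) (mul_nonneg hM hΞ)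
  have hrhs : -(R / 2) * ∫ s in (0:ℝ)..x, H s * ξ s ≤ |R| / 2 * (M * Ξ * (0 - a)) := by
    calc -(R / 2) * ∫ s in (0:ℝ)..x, H s * ξ s
        ≤ |-(R / 2) * ∫ s in (0:ℝ)..x, H s * ξ s| := le_abs_self _
      _ = |R| / 2 * |∫ s in (0:ℝ)..x, H s * ξ s| := by rw [abs_mul, abs_neg, abs_div, abs_two]
      _ ≤ |R| / 2 * (M * Ξ * (0 - a)) := by gcongr
  have := le_div_of_mul_le_of_le (hineq.trans hrhs)
    (mul_nonneg (by positivity) (mul_nonneg (mul_nonneg hM hΞ) (by linarith [hx.1, hx.2]))) hm hφ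
  calc y ≤ |R| / 2 * (M * Ξ * (0 - a)) / m := this
    _ = |R| / 2 * Ξ / m * M * (0 - a) := by ring

theorem stmt_3_general (ε₀ R : ℝ) (hε₀ : 0 < ε₀)
    (H H' φ ξ : ℝ → ℝ)
    (hHderiv : ∀ t ∈ Icc (-ε₀) 0, HasDerivWithinAt H (H' t) (Icc (-ε₀) 0) t)
    (hH0 : H 0 = 0)
    (hφcont : ContinuousOn φ (Icc (-ε₀) 0))
    (hξcont : ContinuousOn ξ (Icc (-ε₀) 0))
    (hφpos : ∀ t ∈ Icc (-ε₀) 0, 0 < φ t)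
    (hξpos : ∀ t ∈ Icc (-ε₀) 0, 0 < ξ t)
    (hineq : ∀ t ∈ Icc (-ε₀) 0,
      H' t * φ t ≤ -(R / 2) * ∫ s in (0:ℝ)..t, H s * ξ s) :
    ∃ ε, 0 < ε ∧ ε ≤ ε₀ ∧ ∀ t ∈ Ioc (-ε) 0, 0 ≤ H t := by
  have hne : (Icc (-ε₀) (0:ℝ)).Nonempty := nonempty_Icc.2 (by linarith)
  obtain ⟨xm, hxm, hφmin⟩ := isCompact_Icc.exists_isMinOn hne hφcont
  obtain ⟨xΞ, hxΞ, hξmax⟩ := isCompact_Icc.exists_isMaxOn hne hξcont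
  set K := |R| / 2 * ξ xΞ / φ xm
  have hK : 0 ≤ K := by have := hφpos xm hxm; have := hξpos xΞ hxΞ; positivity
  obtain ⟨δ, hδ, hδε₀, hKδ⟩ := exists_pos_le_mul_sq_lt_one K hε₀
  refine ⟨δ, hδ, hδε₀, fun t₀ ht₀ => le_of_not_gt fun hneg => ?_⟩
  have hsub : Icc t₀ 0 ⊆ Icc (-ε₀) 0 := Icc_subset_Icc (by linarith [ht₀.1]) le_rfl
  have hKt₀ : K * (0 - t₀) ^ 2 < 1 :=
    lt_of_le_of_lt (by gcongr <;> linarith [ht₀.1, ht₀.2]) hKδ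
  have hH'le : ∀ M, (∀ u ∈ Icc t₀ 0, |H u| ≤ M) → ∀ x ∈ Ioo t₀ 0, H' x ≤ K * M * (0 - t₀) :=
    fun M hM x hx =>
      have hx' : x ∈ Icc t₀ 0 := Ioo_subset_Icc_self hx
      le_of_mul_le_neg_half_mul_integral (hφpos xm hxm) (hφmin (hsub hx')) hx' hM
        (fun s hs => (abs_of_pos (hξpos s (hsub hs))).trans_le (hξmax (hsub hs)))
        (hineq x (hsub hx'))
  have hzero := eqOn_zero_of_deriv_le_mul_sup hK hKt₀ ht₀.2
    (fun t ht => (hHderiv t (hsub ht)).continuousWithinAt.mono hsub)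
    (fun x hx => (hHderiv x (hsub (Ioo_subset_Icc_self hx))).mono (Ioo_subset_Icc_self.trans hsub))
    hH'le hneg.le hH0.ge
  exact hneg.ne (hzero ⟨le_rfl, ht₀.2⟩)

/-- The mirrored Claim (for negative parameter values) in the proof of
Proposition 4.1: if `H` is C¹ on `[−ε₀, 0]` with `H(0) = 0` and satisfies
`H′(t)·φ(t) ≤ −(R/2)·∫₀ᵗ H(s)·ξ(s) ds` (signed integral), then `H ≥ 0`
on `(−ε, 0]` for some `ε ∈ (0, ε₀]`. -/
theorem stmt_3 (ε₀ R : ℝ) (hε₀ : 0 < ε₀)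
    (H H' φ ξ : ℝ → ℝ)
    (hHderiv : ∀ t ∈ Icc (-ε₀) 0, HasDerivWithinAt H (H' t) (Icc (-ε₀) 0) t)
    (hH'cont : ContinuousOn H' (Icc (-ε₀) 0))
    (hH0 : H 0 = 0)
    (hφcont : ContinuousOn φ (Icc (-ε₀) 0))
    (hξcont : ContinuousOn ξ (Icc (-ε₀) 0))
    (hφpos : ∀ t ∈ Icc (-ε₀) 0, 0 < φ t)
    (hξpos : ∀ t ∈ Icc (-ε₀) 0, 0 < ξ t)
    (hineq : ∀ t ∈ Icc (-ε₀) 0,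
      H' t * φ t ≤ -(R / 2) * ∫ s in (0:ℝ)..t, H s * ξ s) :
    ∃ ε, 0 < ε ∧ ε ≤ ε₀ ∧ ∀ t ∈ Ioc (-ε) 0, 0 ≤ H t :=
  stmt_3_general ε₀ R hε₀ H H' φ ξ hHderiv hH0 hφcont hξcont hφpos hξpos hineq
end

section
/- Let ε₀ > 0 and let R be any real number. Let A, H : (−ε₀,ε₀) → ℝ be continuously differentiable with H(0) = 0, and let φ, ξ : (−ε₀,ε₀) → ℝ be continuous functions with φ(t) > 0 and ξ(t) > 0 for all t ∈ (−ε₀,ε₀). Suppose that A′(t) = H(t)·ξ(t) for every t ∈ (−ε₀,ε₀), and that H′(t)·φ(t) ≤ (R/2)·(A(0) − A(t)) for every t ∈ (−ε₀,ε₀). Then there exists ε ∈ (0,ε₀] such that A(t) ≤ A(0) for every t ∈ (−ε,ε). -/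
/-!
Write `u = A(0) - A`. Near `0` the weight `ξ` is bounded by some `K` and `φ` is bounded below,
so inequality (8) gives `H' ≤ c |u|`. On an interval `[0, τ]` with `K c τ² < 1`, suppose `u`
becomes negative, let `m < 0` be its minimum, attained at `τ'`, and `M ≥ 0` its maximum on
`[0, τ']`. Then `|u| ≤ M - m` on `[0, τ']`, so integrating `H' ≤ c (M - m)` from `H(0) = 0` and
then `A' = H ξ` shows that `u` drops by at most `K c τ² (M - m) < M - m` on `[0, τ']`, which
contradicts the drop from `M` to `m`. The negative side follows by reflecting `t ↦ -t`.
-/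

open Set Filter Topology

lemma sub_le_mul_sub_of_hasDerivAt_le {f f' : ℝ → ℝ} {a b C : ℝ} (hab : a ≤ b)
    (hf : ∀ x ∈ Icc a b, HasDerivAt f (f' x) x) (hle : ∀ x ∈ Icc a b, f' x ≤ C) :
    f b - f a ≤ C * (b - a) := by
  rcases hab.eq_or_lt with rfl | hlt
  · simp
  obtain ⟨x, hx, hslope⟩ := exists_hasDerivAt_eq_slope f f' hlt
    (fun x hx => (hf x hx).continuousAt.continuousWithinAt)
    (fun x hx => hf x (Ioo_subset_Icc_self hx))
  have := hle x (Ioo_subset_Icc_self hx)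
  rwa [hslope, div_le_iff₀ (sub_pos.2 hlt)] at this

lemma exists_pos_le_mul_sq_lt_one_s5 (a : ℝ) {ρ : ℝ} (hρ : 0 < ρ) :
    ∃ ε, 0 < ε ∧ ε ≤ ρ ∧ a * ε ^ 2 < 1 := by
  have hlim : Tendsto (fun ε : ℝ => a * ε ^ 2) (𝓝[>] 0) (𝓝 0) := by
    exact ((by fun_prop : Continuous fun ε : ℝ => a * ε ^ 2).tendsto' 0 0 (by simp)).mono_left
      nhdsWithin_le_nhds
  obtain ⟨ε, hsmall, hερ, hεpos⟩ := ((hlim.eventually (gt_mem_nhds one_pos)).and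
    ((eventually_nhdsWithin_of_eventually_nhds (eventually_le_nhds hρ)).and
      eventually_mem_nhdsWithin)).exists
  exact ⟨ε, hεpos, hερ, hsmall⟩

lemma le_mul_abs_of_mul_le {h φ φ₀ R u : ℝ} (hφ₀ : 0 < φ₀) (hφ : φ₀ ≤ φ)
    (hle : h * φ ≤ R / 2 * u) : h ≤ |R| / (2 * φ₀) * |u| := by
  have hRu : R / 2 * u ≤ |R| / 2 * |u| := by
    simpa only [abs_mul, abs_div, abs_two] using le_abs_self (R / 2 * u)
  calc h ≤ |R| / 2 * |u| / φ := by rw [le_div_iff₀ (hφ₀.trans_le hφ)]; linarith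
    _ ≤ |R| / 2 * |u| / φ₀ := div_le_div_of_nonneg_left (by positivity) hφ₀ hφ
    _ = |R| / (2 * φ₀) * |u| := by ring

/-- `A` is the area, `H` the mean curvature and `ξ` the weight of the first variation formula;
the last field is inequality (8) after dividing by `φ` and bounding `1 / φ` above. -/
structure AreaCurvatureBounds (A H H' ξ : ℝ → ℝ) (K c : ℝ) (s : Set ℝ) : Prop where
  hasDerivAt_area : ∀ x ∈ s, HasDerivAt A (H x * ξ x) x
  hasDerivAt_curvature : ∀ x ∈ s, HasDerivAt H (H' x) x
  weight_nonneg : ∀ x ∈ s, 0 ≤ ξ x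
  weight_le : ∀ x ∈ s, ξ x ≤ K
  curvature_deriv_le : ∀ x ∈ s, H' x ≤ c * |A 0 - A x|

namespace AreaCurvatureBounds

variable {A H H' ξ : ℝ → ℝ} {K c τ : ℝ} {s t : Set ℝ}

lemma mono (h : AreaCurvatureBounds A H H' ξ K c s) (hts : t ⊆ s) :
    AreaCurvatureBounds A H H' ξ K c t where
  hasDerivAt_area x hx := h.hasDerivAt_area x (hts hx)
  hasDerivAt_curvature x hx := h.hasDerivAt_curvature x (hts hx)
  weight_nonneg x hx := h.weight_nonneg x (hts hx)
  weight_le x hx := h.weight_le x (hts hx)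
  curvature_deriv_le x hx := h.curvature_deriv_le x (hts hx)

lemma comp_neg (h : AreaCurvatureBounds A H H' ξ K c (-s)) :
    AreaCurvatureBounds (fun t => A (-t)) (fun t => -H (-t)) (fun t => H' (-t))
      (fun t => ξ (-t)) K c s where
  hasDerivAt_area x hx := by
    simpa [Function.comp_def, mul_comm] using
      (h.hasDerivAt_area (-x) (neg_mem_neg.2 hx)).comp x (hasDerivAt_neg x)
  hasDerivAt_curvature x hx := by
    simpa [Function.comp_def] using
      ((h.hasDerivAt_curvature (-x) (neg_mem_neg.2 hx)).comp x (hasDerivAt_neg x)).fun_neg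
  weight_nonneg x hx := h.weight_nonneg (-x) (neg_mem_neg.2 hx)
  weight_le x hx := h.weight_le (-x) (neg_mem_neg.2 hx)
  curvature_deriv_le x hx := by
    simpa using h.curvature_deriv_le (-x) (neg_mem_neg.2 hx)

lemma sub_le_of_abs_le (h : AreaCurvatureBounds A H H' ξ K c (Icc 0 τ)) (hc : 0 ≤ c)
    (hH0 : H 0 = 0) {a b N : ℝ} (ha : 0 ≤ a) (hab : a ≤ b) (hbτ : b ≤ τ)
    (hN : ∀ x ∈ Icc 0 b, |A 0 - A x| ≤ N) :
    A b - A a ≤ K * c * τ ^ 2 * N := by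
  have hsub : Icc 0 b ⊆ Icc 0 τ := Icc_subset_Icc_right hbτ
  have hb : 0 ≤ b := ha.trans hab
  have hτ : 0 ≤ τ := hb.trans hbτ
  have hN0 : 0 ≤ N := (abs_nonneg _).trans (hN 0 ⟨le_rfl, hb⟩)
  have hK : 0 ≤ K := (h.weight_nonneg 0 ⟨le_rfl, hτ⟩).trans (h.weight_le 0 ⟨le_rfl, hτ⟩)
  have hH : ∀ x ∈ Icc 0 b, H x ≤ c * N * x := fun x hx => by
    have := sub_le_mul_sub_of_hasDerivAt_le hx.1
      (fun y hy => h.hasDerivAt_curvature y (hsub (Icc_subset_Icc_right hx.2 hy)))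
      (fun y hy => (h.curvature_deriv_le y (hsub (Icc_subset_Icc_right hx.2 hy))).trans
        (mul_le_mul_of_nonneg_left (hN y (Icc_subset_Icc_right hx.2 hy)) hc))
    rw [hH0] at this
    linarith
  have hA' : ∀ x ∈ Icc a b, H x * ξ x ≤ c * N * τ * K := fun x hx => by
    have hx0 : x ∈ Icc 0 b := ⟨ha.trans hx.1, hx.2⟩
    have hξ0 := h.weight_nonneg x (hsub hx0)
    have hξK := h.weight_le x (hsub hx0)
    have hxτ : x ≤ τ := hx.2.trans hbτ
    calc H x * ξ x ≤ c * N * x * ξ x := mul_le_mul_of_nonneg_right (hH x hx0) hξ0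
      _ ≤ c * N * τ * K := by gcongr
  calc A b - A a ≤ c * N * τ * K * (b - a) := sub_le_mul_sub_of_hasDerivAt_le hab
        (fun x hx => h.hasDerivAt_area x (hsub ⟨ha.trans hx.1, hx.2⟩)) hA'
    _ ≤ c * N * τ * K * τ := by gcongr; linarith
    _ = K * c * τ ^ 2 * N := by ring

lemma apply_le_apply_zero_of_mem_Icc_zero (h : AreaCurvatureBounds A H H' ξ K c (Icc 0 τ))
    (hc : 0 ≤ c) (hsmall : K * c * τ ^ 2 < 1) (hH0 : H 0 = 0) :
    ∀ t ∈ Icc 0 τ, A t ≤ A 0 := by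
  intro t₀ ht₀
  by_contra! hbad
  have hcont : ContinuousOn (fun t => A 0 - A t) (Icc 0 t₀) := fun x hx =>
    (h.hasDerivAt_area x ⟨hx.1, hx.2.trans ht₀.2⟩).continuousAt.continuousWithinAt.const_sub _
  obtain ⟨τ', hτ', hmin⟩ := isCompact_Icc.exists_isMinOn ⟨t₀, ht₀.1, le_rfl⟩ hcont
  obtain ⟨σ, hσ, hmax⟩ := isCompact_Icc.exists_isMaxOn ⟨0, le_rfl, hτ'.1⟩
    (hcont.mono (Icc_subset_Icc_right hτ'.2))
  have hm : A 0 - A τ' < 0 := by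
    have : A 0 - A τ' ≤ A 0 - A t₀ := hmin (right_mem_Icc.2 ht₀.1)
    linarith
  have hM : 0 ≤ A 0 - A σ := by
    simpa using hmax (left_mem_Icc.2 hτ'.1)
  have hdrop := h.sub_le_of_abs_le hc hH0 hσ.1 hσ.2 (hτ'.2.trans ht₀.2)
    (N := (A 0 - A σ) - (A 0 - A τ')) fun x hx => by
      have hlo : A 0 - A τ' ≤ A 0 - A x := hmin (Icc_subset_Icc_right hτ'.2 hx)
      have hhi : A 0 - A x ≤ A 0 - A σ := hmax hx
      rw [abs_le]
      constructor <;> linarith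
  nlinarith [mul_pos (sub_pos.2 hsmall) (show 0 < (A 0 - A σ) - (A 0 - A τ') by linarith)]

lemma apply_le_apply_zero (h : AreaCurvatureBounds A H H' ξ K c (Icc (-τ) τ)) (hc : 0 ≤ c)
    (hsmall : K * c * τ ^ 2 < 1) (hH0 : H 0 = 0) :
    ∀ t ∈ Icc (-τ) τ, A t ≤ A 0 := by
  intro t ht
  rcases le_total 0 t with ht0 | ht0
  · exact (h.mono (Icc_subset_Icc_left (by linarith [ht.2]))).apply_le_apply_zero_of_mem_Icc_zero
      hc hsmall hH0 t ⟨ht0, ht.2⟩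
  · have hreflect : AreaCurvatureBounds A H H' ξ K c (-Icc 0 τ) :=
      h.mono (by rw [neg_Icc, neg_zero]; exact Icc_subset_Icc_right (by linarith [ht.1]))
    simpa using hreflect.comp_neg.apply_le_apply_zero_of_mem_Icc_zero hc hsmall (by simp [hH0])
      (-t) ⟨by linarith, by linarith [ht.1]⟩

end AreaCurvatureBounds

theorem stmt_5_general (ε₀ R : ℝ) (hε₀ : 0 < ε₀)
    (A A' H H' φ ξ : ℝ → ℝ)
    (hAderiv : ∀ t ∈ Ioo (-ε₀) ε₀, HasDerivAt A (A' t) t)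
    (hHderiv : ∀ t ∈ Ioo (-ε₀) ε₀, HasDerivAt H (H' t) t)
    (hH0 : H 0 = 0)
    (hφcont : ContinuousOn φ (Ioo (-ε₀) ε₀))
    (hξcont : ContinuousOn ξ (Ioo (-ε₀) ε₀))
    (hφpos : ∀ t ∈ Ioo (-ε₀) ε₀, 0 < φ t)
    (hξpos : ∀ t ∈ Ioo (-ε₀) ε₀, 0 < ξ t)
    (hfirstvar : ∀ t ∈ Ioo (-ε₀) ε₀, A' t = H t * ξ t)
    (hineq : ∀ t ∈ Ioo (-ε₀) ε₀, H' t * φ t ≤ (R / 2) * (A 0 - A t)) :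
    ∃ ε, 0 < ε ∧ ε ≤ ε₀ ∧ ∀ t ∈ Ioo (-ε) ε, A t ≤ A 0 := by
  set ρ := ε₀ / 2 with hρdef
  have hρ : 0 < ρ := half_pos hε₀
  have hsub : Icc (-ρ) ρ ⊆ Ioo (-ε₀) ε₀ := Icc_subset_Ioo (by linarith) (by linarith)
  obtain ⟨p, hp, hφmin⟩ := isCompact_Icc.exists_isMinOn (nonempty_Icc.2 (by linarith))
    (hφcont.mono hsub)
  have hφp : 0 < φ p := hφpos p (hsub hp)
  obtain ⟨K, hK⟩ := isCompact_Icc.exists_bound_of_continuousOn (hξcont.mono hsub)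
  set c := |R| / (2 * φ p)
  have hc : 0 ≤ c := by positivity
  obtain ⟨ε, hε, hερ, hsmall⟩ := exists_pos_le_mul_sq_lt_one_s5 (K * c) hρ
  have hεsub : Icc (-ε) ε ⊆ Icc (-ρ) ρ := Icc_subset_Icc (by linarith) hερ
  have hbounds : AreaCurvatureBounds A H H' ξ K c (Icc (-ε) ε) :=
    { hasDerivAt_area := fun x hx => hfirstvar x (hsub (hεsub hx)) ▸ hAderiv x (hsub (hεsub hx))
      hasDerivAt_curvature := fun x hx => hHderiv x (hsub (hεsub hx))
      weight_nonneg := fun x hx => (hξpos x (hsub (hεsub hx))).le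
      weight_le := fun x hx => (le_abs_self _).trans (hK x (hεsub hx))
      curvature_deriv_le := fun x hx =>
        le_mul_abs_of_mul_le hφp (hφmin (hεsub hx)) (hineq x (hsub (hεsub hx))) }
  exact ⟨ε, hε, by linarith, fun t ht =>
    hbounds.apply_le_apply_zero hc hsmall hH0 t (Ioo_subset_Icc_self ht)⟩

/-- Full analytic content of Proposition 4.1 (two-sided area comparison):
if `A` and `H` are C¹ on `(−ε₀, ε₀)`, `H(0) = 0`, `A′(t) = H(t)·ξ(t)` and
`H′(t)·φ(t) ≤ (R/2)·(A(0) − A(t))`, then `A(t) ≤ A(0)` on `(−ε, ε)` for some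
`ε ∈ (0, ε₀]`. -/
theorem stmt_5 (ε₀ R : ℝ) (hε₀ : 0 < ε₀)
    (A A' H H' φ ξ : ℝ → ℝ)
    (hAderiv : ∀ t ∈ Ioo (-ε₀) ε₀, HasDerivAt A (A' t) t)
    (hA'cont : ContinuousOn A' (Ioo (-ε₀) ε₀))
    (hHderiv : ∀ t ∈ Ioo (-ε₀) ε₀, HasDerivAt H (H' t) t)
    (hH'cont : ContinuousOn H' (Ioo (-ε₀) ε₀))
    (hH0 : H 0 = 0)
    (hφcont : ContinuousOn φ (Ioo (-ε₀) ε₀))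
    (hξcont : ContinuousOn ξ (Ioo (-ε₀) ε₀))
    (hφpos : ∀ t ∈ Ioo (-ε₀) ε₀, 0 < φ t)
    (hξpos : ∀ t ∈ Ioo (-ε₀) ε₀, 0 < ξ t)
    (hfirstvar : ∀ t ∈ Ioo (-ε₀) ε₀, A' t = H t * ξ t)
    (hineq : ∀ t ∈ Ioo (-ε₀) ε₀, H' t * φ t ≤ (R / 2) * (A 0 - A t)) :
    ∃ ε, 0 < ε ∧ ε ≤ ε₀ ∧ ∀ t ∈ Ioo (-ε) ε, A t ≤ A 0 :=
  stmt_5_general ε₀ R hε₀ A A' H H' φ ξ hAderiv hHderiv hH0 hφcont hξcont hφpos hξpos hfirstvar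
    hineq
end
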